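/- For every L > 0 and all a, b ∈ ℤ' with a ≠ b, the series Σ_{l∈ℤ'_+} J_{a+l}(2L) J_{b+l}(2L) converges absolutely and equals L·(J_{a−1/2}(2L) J_{b+1/2}(2L) − J_{a+1/2}(2L) J_{b−1/2}(2L)) / (a − b). -/

import Mathlib

/-!
Bessel functions of the first kind of integer order and argument `2L`:
`J_n(2L) = ∑_{j≥0} (-1)^j L^{2j+n}/(j!(n+j)!)` for `n ≥ 0`, and `J_{-n} = (-1)^n J_n`.

We parametrize the half-integers `ℤ' = ℤ + 1/2` by `ℤ`, the half-integer `a = m + 1/2`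
corresponding to `m : ℤ`; a half-integer `l ∈ ℤ'_+` is `l = j + 1/2` with `j : ℕ`, so that
`a + l = m + j + 1 ∈ ℤ`, `a - 1/2 = m`, `a + 1/2 = m + 1` and `a - b = m - n`.
-/
noncomputable def besselJnat (L : ℝ) (n : ℕ) : ℝ :=
  ∑' j : ℕ, (-1 : ℝ) ^ j * L ^ (2 * j + n) / (Nat.factorial j * Nat.factorial (n + j))

noncomputable def besselJint (L : ℝ) (n : ℤ) : ℝ :=
  if 0 ≤ n then besselJnat L n.toNat else (-1 : ℝ) ^ (-n).toNat * besselJnat L (-n).toNat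

/-!
For the Casoratian `W(m, n) = J_m J_{n+1} - J_{m+1} J_n`, the three-term recurrence
`L (J_{k-1} + J_{k+1}) = k J_k` gives `(m - n) J_{m+1} J_{n+1} = L (W(m, n) - W(m+1, n+1))`,
so the series telescopes to `L W(m, n) / (m - n)`. The bound `|J_k(2L)| ≤ e^{L²} |L|^k / k!`
makes every shifted sequence `j ↦ J_{m+j}` absolutely summable, which gives the absolute
convergence and kills the tail `W(m+j, n+j)` of the telescoping sum.
-/
open Nat

lemma summable_abs_mul_of_summable_abs {ι : Type*} {f g : ι → ℝ}
    (hf : Summable fun i => |f i|) (hg : Summable fun i => |g i|) :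
    Summable fun i => |f i * g i| :=
  (hf.mul_right (∑' i, |g i|)).of_nonneg_of_le (fun _ => abs_nonneg _) fun i => by
    rw [abs_mul]
    exact mul_le_mul_of_nonneg_left (hg.le_tsum i fun _ _ => abs_nonneg _) (abs_nonneg _)

lemma Summable.tsum_sub_succ {A : ℕ → ℝ} (hA : Summable A) :
    ∑' j, (A j - A (j + 1)) = A 0 := by
  rw [hA.tsum_sub ((summable_nat_add_iff 1).2 hA), hA.tsum_eq_zero_add]
  exact add_sub_cancel_right _ _

def casoratian (J : ℤ → ℝ) (m n : ℤ) : ℝ := J m * J (n + 1) - J (m + 1) * J n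

lemma casoratian_sub_casoratian_add_one {J : ℤ → ℝ} {L : ℝ}
    (hJ : ∀ k : ℤ, L * J (k - 1) + L * J (k + 1) = k * J k) (m n : ℤ) :
    L * (casoratian J m n - casoratian J (m + 1) (n + 1)) = (m - n) * (J (m + 1) * J (n + 1)) := by
  have hm := hJ (m + 1)
  have hn := hJ (n + 1)
  rw [add_sub_cancel_right, add_assoc, one_add_one_eq_two] at hm hn
  rw [casoratian, casoratian, add_assoc m, add_assoc n, one_add_one_eq_two]
  push_cast at hm hn
  linear_combination J (n + 1) * hm - J (m + 1) * hn

noncomputable def besselTerm (L : ℝ) (n j : ℕ) : ℝ :=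
  (-1 : ℝ) ^ j * L ^ (2 * j + n) / (j ! * (n + j)!)

lemma abs_besselTerm_le (L : ℝ) (n j : ℕ) :
    |besselTerm L n j| ≤ |L| ^ n / n ! * ((L ^ 2) ^ j / j !) := by
  calc |besselTerm L n j| = |L| ^ n * (L ^ 2) ^ j / (j ! * (n + j)!) := by
        rw [besselTerm, abs_div, abs_mul, abs_pow, abs_pow, abs_neg, abs_one, one_pow, one_mul,
          pow_add, pow_mul, sq_abs, abs_of_nonneg (by positivity : (0 : ℝ) ≤ j ! * (n + j)!),
          mul_comm ((L ^ 2) ^ j)]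
    _ ≤ |L| ^ n * (L ^ 2) ^ j / (j ! * n !) := by
        gcongr
        exact Nat.le_add_right n j
    _ = |L| ^ n / n ! * ((L ^ 2) ^ j / j !) := by ring

lemma summable_besselTerm (L : ℝ) (n : ℕ) : Summable (besselTerm L n) :=
  .of_norm_bounded ((Real.summable_pow_div_factorial (L ^ 2)).mul_left _) (abs_besselTerm_le L n)

lemma abs_besselJnat_le (L : ℝ) (n : ℕ) :
    |besselJnat L n| ≤ |L| ^ n / n ! * Real.exp (L ^ 2) := by
  have hexp : HasSum (fun j => (L ^ 2) ^ j / j !) (Real.exp (L ^ 2)) := by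
    simpa [← Real.exp_eq_exp_ℝ] using NormedSpace.expSeries_div_hasSum_exp (L ^ 2)
  exact tsum_of_norm_bounded (f := besselTerm L n) (hexp.mul_left _) (abs_besselTerm_le L n)

lemma summable_abs_besselJnat (L : ℝ) : Summable fun n => |besselJnat L n| :=
  ((Real.summable_pow_div_factorial |L|).mul_right _).of_nonneg_of_le
    (fun _ => abs_nonneg _) (abs_besselJnat_le L)

lemma besselJnat_add_besselJnat_add_two (L : ℝ) (n : ℕ) :
    L * besselJnat L n + L * besselJnat L (n + 2) = (n + 1) * besselJnat L (n + 1) := by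
  set g : ℕ → ℝ := fun j => (n + 1) * besselTerm L (n + 1) j - L * besselTerm L n j
  have hg : Summable g :=
    ((summable_besselTerm L _).mul_left _).sub ((summable_besselTerm L _).mul_left _)
  have hg_zero : g 0 = 0 := by
    simp only [g, besselTerm, mul_zero, zero_add, add_zero, pow_zero, Nat.factorial_zero,
      Nat.factorial_succ]
    push_cast
    field_simp
    ring
  have hg_succ (j : ℕ) : g (j + 1) = L * besselTerm L (n + 2) j := by
    simp only [g, besselTerm, show n + 1 + (j + 1) = n + j + 1 + 1 by ring,
      show n + (j + 1) = n + j + 1 by ring, show n + 2 + j = n + j + 1 + 1 by ring,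
      Nat.factorial_succ]
    push_cast
    field_simp
    ring
  have hsum : ∑' j, g j = (n + 1) * besselJnat L (n + 1) - L * besselJnat L n := by
    rw [((summable_besselTerm L _).mul_left _).tsum_sub ((summable_besselTerm L _).mul_left _),
      tsum_mul_left, tsum_mul_left, besselJnat, besselJnat]
    rfl
  rw [hg.tsum_eq_zero_add, hg_zero, zero_add, tsum_congr hg_succ, tsum_mul_left] at hsum
  change L * besselJnat L (n + 2) = _ at hsum
  linarith

lemma besselJint_natCast (L : ℝ) (n : ℕ) : besselJint L n = besselJnat L n := by
  simp [besselJint]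

lemma besselJint_neg_natCast (L : ℝ) (n : ℕ) :
    besselJint L (-n) = (-1 : ℝ) ^ n * besselJnat L n := by
  rcases n.eq_zero_or_pos with rfl | hn
  · simp [besselJint]
  · simp [besselJint, hn.ne']

lemma besselJint_neg (L : ℝ) (k : ℤ) : besselJint L (-k) = (-1 : ℝ) ^ k * besselJint L k := by
  obtain ⟨n, rfl | rfl⟩ := k.eq_nat_or_neg
  · rw [besselJint_neg_natCast, besselJint_natCast, zpow_natCast]
  · rw [neg_neg, besselJint_neg_natCast, besselJint_natCast, zpow_neg, zpow_natCast,
      inv_mul_cancel_left₀ (pow_ne_zero _ (by norm_num))]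

lemma summable_abs_besselJint_add (L : ℝ) (m : ℤ) :
    Summable fun j : ℕ => |besselJint L (m + j)| := by
  rw [← summable_nat_add_iff m.natAbs]
  have hshift (j : ℕ) : m + ((j + m.natAbs : ℕ) : ℤ) = ((j + (m + m.natAbs).toNat : ℕ) : ℤ) := by
    omega
  simp_rw [hshift, besselJint_natCast]
  exact (summable_nat_add_iff _).2 (summable_abs_besselJnat L)

lemma summable_abs_besselJint_add_mul (L : ℝ) (a b : ℤ) :
    Summable fun j : ℕ => |besselJint L (a + j) * besselJint L (b + j)| :=
  summable_abs_mul_of_summable_abs (summable_abs_besselJint_add L a)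
    (summable_abs_besselJint_add L b)

lemma besselJint_sub_one_add_besselJint_add_one (L : ℝ) (k : ℤ) :
    L * besselJint L (k - 1) + L * besselJint L (k + 1) = k * besselJint L k := by
  have hnat (n : ℕ) :
      L * besselJint L (n - 1) + L * besselJint L (n + 1) = n * besselJint L n := by
    rcases n with _ | n
    · have := besselJint_neg L 1
      simp only [zpow_one] at this
      simp [this]
    · have := besselJnat_add_besselJnat_add_two L n
      rw [show ((n + 1 : ℕ) : ℤ) - 1 = n by push_cast; ring,
        show ((n + 1 : ℕ) : ℤ) + 1 = (n + 2 : ℕ) by push_cast; ring]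
      simp only [besselJint_natCast]
      push_cast
      linarith
  obtain ⟨n, rfl | rfl⟩ := k.eq_nat_or_neg
  · exact hnat n
  · have hsign : (-1 : ℝ) ^ ((n : ℤ) + 1) = -(-1) ^ (n : ℤ) ∧
        (-1 : ℝ) ^ ((n : ℤ) - 1) = -(-1) ^ (n : ℤ) := by
      constructor <;> simp [zpow_add₀, zpow_sub₀, div_neg]
    rw [show -(n : ℤ) - 1 = -(n + 1) by ring, show -(n : ℤ) + 1 = -(n - 1) by ring,
      besselJint_neg, besselJint_neg, besselJint_neg, hsign.1, hsign.2]
    push_cast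
    linear_combination -(-1 : ℝ) ^ (n : ℤ) * hnat n

theorem discreteBesselKernel_integrable_form_general (L : ℝ) (m n : ℤ) (hmn : m ≠ n) :
    Summable (fun j : ℕ => |besselJint L (m + j + 1) * besselJint L (n + j + 1)|) ∧
    ∑' j : ℕ, besselJint L (m + j + 1) * besselJint L (n + j + 1) =
      L * (besselJint L m * besselJint L (n + 1) - besselJint L (m + 1) * besselJint L n) /
        ((m : ℝ) - (n : ℝ)) := by
  have hmn' : (m : ℝ) - n ≠ 0 := sub_ne_zero.2 (Int.cast_injective.ne hmn)
  set J := besselJint L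
  set A : ℕ → ℝ := fun j => casoratian J (m + j) (n + j)
  have hA : Summable A := by
    refine (summable_abs_besselJint_add_mul L m (n + 1)).of_abs.sub
      (summable_abs_besselJint_add_mul L (m + 1) n).of_abs |>.congr fun j => ?_
    simp only [A, J, casoratian, add_right_comm _ _ (1 : ℤ)]
  have hstep (j : ℕ) : J (m + j + 1) * J (n + j + 1) = L / (m - n) * (A j - A (j + 1)) := by
    have := casoratian_sub_casoratian_add_one (besselJint_sub_one_add_besselJint_add_one L)
      (m + j) (n + j)
    simp only [A, Nat.cast_succ, ← add_assoc]
    rw [div_mul_eq_mul_div, this, eq_div_iff hmn']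
    push_cast
    ring
  refine ⟨by convert summable_abs_besselJint_add_mul L (m + 1) (n + 1) using 5 <;> ring, ?_⟩
  calc ∑' j : ℕ, J (m + j + 1) * J (n + j + 1) = ∑' j, L / (m - n) * (A j - A (j + 1)) :=
        tsum_congr hstep
    _ = L / (m - n) * A 0 := by rw [tsum_mul_left, hA.tsum_sub_succ]
    _ = _ := by simp only [A, casoratian, Nat.cast_zero, add_zero]; ring

/-- for `L > 0` and distinct half-integers `a = m + 1/2`, `b = n + 1/2`,
the series `∑_{l ∈ ℤ'_+} J_{a+l}(2L) J_{b+l}(2L)` converges absolutely and equals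
`L (J_{a-1/2} J_{b+1/2} - J_{a+1/2} J_{b-1/2})/(a-b)`. -/
theorem discreteBesselKernel_integrable_form (L : ℝ) (hL : 0 < L) (m n : ℤ) (hmn : m ≠ n) :
    Summable (fun j : ℕ => |besselJint L (m + j + 1) * besselJint L (n + j + 1)|) ∧
    ∑' j : ℕ, besselJint L (m + j + 1) * besselJint L (n + j + 1) =
      L * (besselJint L m * besselJint L (n + 1) - besselJint L (m + 1) * besselJint L n) /
        ((m : ℝ) - (n : ℝ)) :=
  discreteBesselKernel_integrable_form_general L m n hmn
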